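/- Let α > 1, β = α−1, let μ₀ ∈ 𝓟₂(ℝ^d) be absolutely continuous and let u be the Brenier potential from μ₀ to μ₁ with x ↦ αu(x) − β|x|²/2 convex, so that ω(t) = ((1−t)Id + t∇u)_# μ₀ is a globally length-minimizing geodesic on [0,α]. Then the functional 𝓕(μ₀,μ₁;ρ) = αW₂²(ρ,μ₁) − βW₂²(ρ,μ₀) attains its lower bound −αβ W₂²(μ₀,μ₁) at ρ = ω(α), and ω(α) is the only measure attaining it; in particular W₂²(μ₀,ω(α)) = α²W₂²(μ₀,μ₁) and W₂²(μ₁,ω(α)) = β²W₂²(μ₀,μ₁). -/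

import Mathlib

open MeasureTheory Set
open scoped ENNReal RealInnerProductSpace

noncomputable section

abbrev Rd (d : ℕ) : Type := EuclideanSpace ℝ (Fin d)

/-- A coupling between two measures on `Rd d`. -/
def IsCoupling {d : ℕ} (γ : Measure (Rd d × Rd d)) (μ ν : Measure (Rd d)) : Prop :=
  γ.map Prod.fst = μ ∧ γ.map Prod.snd = ν

/-- Quadratic transport cost of a plan. -/
def transportCost {d : ℕ} (γ : Measure (Rd d × Rd d)) : ℝ≥0∞ :=
  ∫⁻ p, ENNReal.ofReal (‖p.1 - p.2‖ ^ 2) ∂γ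

/-- Squared 2-Wasserstein distance (extended-real valued). -/
def W2sqE {d : ℕ} (μ ν : Measure (Rd d)) : ℝ≥0∞ :=
  ⨅ (γ : Measure (Rd d × Rd d)) (_ : IsCoupling γ μ ν), transportCost γ

/-- Squared 2-Wasserstein distance. -/
def W2sq {d : ℕ} (μ ν : Measure (Rd d)) : ℝ := (W2sqE μ ν).toReal

/-- 2-Wasserstein distance. -/
def W2 {d : ℕ} (μ ν : Measure (Rd d)) : ℝ := Real.sqrt (W2sq μ ν)

/-- Optimal transport plan. -/
def IsOptimalPlan {d : ℕ} (γ : Measure (Rd d × Rd d)) (μ ν : Measure (Rd d)) : Prop :=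
  IsCoupling γ μ ν ∧ transportCost γ = W2sqE μ ν

/-- Probability measures with finite second moment: `𝓟₂(ℝ^d)`. -/
def MemP2 {d : ℕ} (μ : Measure (Rd d)) : Prop :=
  IsProbabilityMeasure μ ∧ (∫⁻ x, ENNReal.ofReal (‖x‖ ^ 2) ∂μ) < ⊤

/-- Probability measures supported on `Ω`: `𝓟(Ω)`. -/
def ProbOn {d : ℕ} (Ω : Set (Rd d)) (μ : Measure (Rd d)) : Prop :=
  IsProbabilityMeasure μ ∧ μ Ωᶜ = 0

/-- θ-dissipative extrapolation operator. -/
def Dissipative {d : ℕ} (θ : ℝ)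
    (E : Measure (Rd d) → Measure (Rd d) → Measure (Rd d)) : Prop :=
  ∀ μ₀ μ₁ : Measure (Rd d), MemP2 μ₀ → MemP2 μ₁ → W2 μ₁ (E μ₀ μ₁) ≤ θ * W2 μ₀ μ₁

/-- Sup norm of the Hessian of a test function. -/
def HessNorm {d : ℕ} (φ : Rd d → ℝ) : ℝ := ⨆ x, ‖iteratedFDeriv ℝ 2 φ x‖

/-- No-flux boundary condition `∇φ · n_∂Ω = 0` on `∂Ω`, expressed via the
normal cone of the convex set `Ω`. -/
def NormalBC {d : ℕ} (Ω : Set (Rd d)) (φ : Rd d → ℝ) : Prop :=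
  ∀ x ∈ frontier Ω, ∀ v : Rd d, (∀ y ∈ Ω, ⟪v, y - x⟫ ≤ 0) → ⟪gradient φ x, v⟫ = 0

/-- Laplacian as the trace of the second derivative. -/
def lap {d : ℕ} (φ : Rd d → ℝ) (x : Rd d) : ℝ :=
  ∑ i : Fin d, iteratedFDeriv ℝ 2 φ x ![EuclideanSpace.single i 1, EuclideanSpace.single i 1]

/-- Absolutely continuous curve in the Wasserstein space on `[0,T]`. -/
def ACCurve {d : ℕ} (T : ℝ) (ϱ : ℝ → Measure (Rd d)) : Prop :=
  ∃ m : ℝ → ℝ, IntegrableOn m (Icc 0 T) ∧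
    ∀ r s : ℝ, 0 ≤ r → r ≤ s → s ≤ T → W2 (ϱ r) (ϱ s) ≤ ∫ t in r..s, m t

/-
Write `T = (1 - α) id + α ∇u` and `D = ∫ ‖x - ∇u x‖² dμ₀`. Since `∇u` and `T` are a.e. gradients
of the convex functions `u` and `α u - (α - 1) ‖·‖² / 2`, the plans they induce from `μ₀` are
optimal, so `W₂²(μ₀, μ₁) = D` and `W₂²(μ₀, ω(α)) = α² D`. In a Euclidean space
`‖a - T b‖² = α ‖a - ∇u b‖² - (α - 1) ‖a - b‖² + α (α - 1) ‖b - ∇u b‖²`; integrating this along a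
coupling of `ρ` with `μ₀`, glued to a nearly optimal coupling of `ρ` with `μ₁`, gives
`W₂²(ρ, ω(α)) ≤ 𝓕(ρ) + α (α - 1) D` for every `ρ`. At `ρ = ω(α)` this forces
`W₂²(μ₁, ω(α)) = (α - 1)² D` (the plan `(∇u, T) # μ₀` gives the other inequality), hence
`𝓕(ω(α)) = -α (α - 1) D`, and any other minimizer `ρ` satisfies `W₂²(ρ, ω(α)) ≤ 0`.
-/

open Filter Topology
open scoped ProbabilityTheory

namespace MeasureTheory

lemma MemLp.integrable_norm_sq {X E : Type*} [MeasurableSpace X] {μ : Measure X}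
    [NormedAddCommGroup E] {f : X → E} (hf : MemLp f 2 μ) :
    Integrable (fun x => ‖f x‖ ^ 2) μ :=
  (memLp_two_iff_integrable_sq_norm hf.1).1 hf

end MeasureTheory

section Euclidean

variable {E : Type*} [NormedAddCommGroup E] [InnerProductSpace ℝ E]

lemma abs_real_inner_le_half_add_sq (v w : E) : |⟪v, w⟫| ≤ (‖v‖ ^ 2 + ‖w‖ ^ 2) / 2 := by
  nlinarith [abs_real_inner_le_norm v w, sq_nonneg (‖v‖ - ‖w‖)]

/-- Integrated against a coupling of a measure with itself, the terms `‖·‖² - 2ψ` cancel: this is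
why maps into the subdifferential of `ψ` are optimal. -/
lemma norm_sub_sq_add_le_of_subgradient {ψ : E → ℝ} {a b s : E} (h : ψ b + ⟪s, a - b⟫ ≤ ψ a) :
    ‖b - s‖ ^ 2 + (‖a‖ ^ 2 - 2 * ψ a) - (‖b‖ ^ 2 - 2 * ψ b) ≤ ‖a - s‖ ^ 2 := by
  rw [norm_sub_sq_real, norm_sub_sq_real]
  rw [inner_sub_right, real_inner_comm a s, real_inner_comm b s] at h
  linarith

lemma norm_sub_extrapolate_sq (α : ℝ) (a b m : E) :
    ‖a - ((1 - α) • b + α • m)‖ ^ 2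
      = α * ‖a - m‖ ^ 2 - (α - 1) * ‖a - b‖ ^ 2 + α * (α - 1) * ‖b - m‖ ^ 2 := by
  have e₁ : a - ((1 - α) • b + α • m) = (a - b) + α • (b - m) := by module
  have e₂ : a - m = (a - b) + (b - m) := by abel
  rw [e₁, e₂, norm_add_sq_real, norm_add_sq_real, real_inner_smul_right, norm_smul,
    mul_pow, Real.norm_eq_abs, sq_abs]
  ring

end Euclidean

section ConvexAnalysis

lemma ConvexOn.add_le_of_hasFDerivAt {E : Type*} [NormedAddCommGroup E] [NormedSpace ℝ E]
    {s : Set E} {f : E → ℝ} {f' : E →L[ℝ] ℝ} {x y : E} (hf : ConvexOn ℝ s f) (hx : x ∈ s)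
    (hy : y ∈ s) (h : HasFDerivAt f f' x) : f x + f' (y - x) ≤ f y := by
  set L := AffineMap.lineMap (k := ℝ) x y
  have hL : ConvexOn ℝ (L ⁻¹' s) (f ∘ L) := hf.comp_affineMap L
  have hderiv : HasDerivAt (f ∘ L) (f' (y - x)) 0 :=
    ((AffineMap.lineMap_apply_zero (k := ℝ) x y).symm ▸ h).comp_hasDerivAt 0
      AffineMap.hasDerivAt_lineMap
  have := hL.le_slope_of_hasDerivAt (by simpa [L] using hx) (by simpa [L] using hy) one_pos
    hderiv
  simp only [slope, sub_zero, inv_one, Function.comp_apply, L, AffineMap.lineMap_apply_one,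
    AffineMap.lineMap_apply_zero, smul_eq_mul, one_mul, vsub_eq_sub] at this
  linarith

variable {F : Type*} [NormedAddCommGroup F] [InnerProductSpace ℝ F] [CompleteSpace F]

lemma ConvexOn.add_inner_le_of_hasGradientAt {f : F → ℝ} {g x : F} (hf : ConvexOn ℝ univ f)
    (h : HasGradientAt f g x) (y : F) : f x + ⟪g, y - x⟫ ≤ f y := by
  rw [← h.fderiv_apply]
  exact hf.add_le_of_hasFDerivAt (mem_univ x) (mem_univ y) h.differentiableAt.hasFDerivAt

lemma DifferentiableAt.hasGradientAt_extrapolate {u : F → ℝ} {x : F}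
    (hx : DifferentiableAt ℝ u x) (α : ℝ) :
    HasGradientAt (fun x => α * u x - (α - 1) * (‖x‖ ^ 2 / 2))
      ((1 - α) • x + α • gradient u x) x := by
  have hq : HasFDerivAt (fun x : F => ‖x‖ ^ 2 / 2) (innerSL ℝ x) x := by
    refine (((hasStrictFDerivAt_norm_sq x).hasFDerivAt.mul_const (2⁻¹ : ℝ)).congr_fderiv ?_
      ).congr_of_eventuallyEq (.of_forall fun v => div_eq_mul_inv _ _)
    ext v
    simp
  rw [hasGradientAt_iff_hasFDerivAt]
  refine ((hx.hasFDerivAt.const_mul α).sub (hq.const_mul (α - 1))).congr_fderiv ?_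
  ext v
  simp only [sub_apply, smul_apply, innerSL_apply_apply, smul_eq_mul,
    InnerProductSpace.toDual_apply_apply, inner_add_left, real_inner_smul_left,
    inner_gradient_left]
  ring

lemma LocallyLipschitz.ae_differentiableAt {E F : Type*} [NormedAddCommGroup E]
    [NormedSpace ℝ E] [FiniteDimensional ℝ E] [MeasurableSpace E] [BorelSpace E]
    [NormedAddCommGroup F] [NormedSpace ℝ F] [FiniteDimensional ℝ F] {μ : Measure E}
    [μ.IsAddHaarMeasure] {f : E → F} (hf : LocallyLipschitz f) :
    ∀ᵐ x ∂μ, DifferentiableAt ℝ f x := by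
  choose K t ht hK using hf
  obtain ⟨T, hTc, hT⟩ := TopologicalSpace.countable_cover_nhds
    (fun x => interior_mem_nhds.2 (ht x))
  have hloc : ∀ x₀ ∈ T, ∀ᵐ x ∂μ, x ∈ interior (t x₀) → DifferentiableAt ℝ f x := fun x₀ _ => by
    filter_upwards [((hK x₀).mono interior_subset).ae_differentiableWithinAt_of_mem] with x hx hxt
    exact (hx hxt).differentiableAt (isOpen_interior.mem_nhds hxt)
  filter_upwards [(ae_ball_iff hTc).2 hloc] with x hx
  obtain ⟨x₀, hx₀, hxt⟩ := mem_iUnion₂.1 (hT ▸ mem_univ x)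
  exact hx x₀ hx₀ hxt

end ConvexAnalysis

section Transport

variable {d : ℕ}

lemma memP2_iff {μ : Measure (Rd d)} : MemP2 μ ↔ IsProbabilityMeasure μ ∧ MemLp id 2 μ := by
  rw [MemP2, memLp_two_iff_integrable_sq_norm aestronglyMeasurable_id, Integrable,
    hasFiniteIntegral_iff_ofReal (ae_of_all _ fun x => by positivity)]
  exact and_congr_right fun _ =>
    ⟨fun h => ⟨(continuous_norm.pow 2).aestronglyMeasurable, h⟩, And.right⟩

lemma MemP2.memLp {μ : Measure (Rd d)} (h : MemP2 μ) : MemLp id 2 μ := (memP2_iff.1 h).2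

lemma MemP2.memLp_of_map {μ : Measure (Rd d)} {S : Rd d → Rd d} (hS : Measurable S)
    (h : MemP2 (μ.map S)) : MemLp S 2 μ :=
  (memLp_map_measure_iff aestronglyMeasurable_id hS.aemeasurable).1 h.memLp

lemma memP2_map {μ : Measure (Rd d)} [IsProbabilityMeasure μ] {S : Rd d → Rd d}
    (hS : Measurable S) (h : MemLp S 2 μ) : MemP2 (μ.map S) :=
  memP2_iff.2 ⟨Measure.isProbabilityMeasure_map hS.aemeasurable,
    (memLp_map_measure_iff aestronglyMeasurable_id hS.aemeasurable).2 h⟩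

namespace IsCoupling

variable {γ : Measure (Rd d × Rd d)} {μ ν : Measure (Rd d)}

lemma memLp_comp_fst {E : Type*} [NormedAddCommGroup E] {p : ℝ≥0∞} (hγ : IsCoupling γ μ ν)
    {f : Rd d → E} (hf : MemLp f p μ) : MemLp (fun q => f q.1) p γ := by
  rw [← hγ.1] at hf
  exact (memLp_map_measure_iff hf.1 measurable_fst.aemeasurable).1 hf

lemma memLp_comp_snd {E : Type*} [NormedAddCommGroup E] {p : ℝ≥0∞} (hγ : IsCoupling γ μ ν)
    {f : Rd d → E} (hf : MemLp f p ν) : MemLp (fun q => f q.2) p γ := by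
  rw [← hγ.2] at hf
  exact (memLp_map_measure_iff hf.1 measurable_snd.aemeasurable).1 hf

lemma integrable_comp_fst (hγ : IsCoupling γ μ ν) {f : Rd d → ℝ} (hf : Integrable f μ) :
    Integrable (fun q => f q.1) γ :=
  memLp_one_iff_integrable.1 (hγ.memLp_comp_fst (memLp_one_iff_integrable.2 hf))

lemma integrable_comp_snd (hγ : IsCoupling γ μ ν) {f : Rd d → ℝ} (hf : Integrable f ν) :
    Integrable (fun q => f q.2) γ :=
  memLp_one_iff_integrable.1 (hγ.memLp_comp_snd (memLp_one_iff_integrable.2 hf))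

lemma integral_comp_fst (hγ : IsCoupling γ μ ν) {f : Rd d → ℝ} (hf : AEStronglyMeasurable f μ) :
    ∫ q, f q.1 ∂γ = ∫ x, f x ∂μ := by
  rw [← hγ.1] at hf ⊢
  exact (integral_map measurable_fst.aemeasurable hf).symm

lemma integral_comp_snd (hγ : IsCoupling γ μ ν) {f : Rd d → ℝ} (hf : AEStronglyMeasurable f ν) :
    ∫ q, f q.2 ∂γ = ∫ x, f x ∂ν := by
  rw [← hγ.2] at hf ⊢
  exact (integral_map measurable_snd.aemeasurable hf).symm

lemma integrable_norm_sub_sq (hγ : IsCoupling γ μ ν) (hμ : MemP2 μ) (hν : MemP2 ν) :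
    Integrable (fun q => ‖q.1 - q.2‖ ^ 2) γ :=
  ((hγ.memLp_comp_fst hμ.memLp).sub (hγ.memLp_comp_snd hν.memLp)).integrable_norm_sq

lemma swap (hγ : IsCoupling γ μ ν) : IsCoupling (γ.map Prod.swap) ν μ :=
  ⟨by rw [Measure.map_map measurable_fst measurable_swap]; exact hγ.2,
    by rw [Measure.map_map measurable_snd measurable_swap]; exact hγ.1⟩

/-- The lift samples `x ∼ μ`, then its first coordinate from the conditional law under `γ` given
that the second coordinate is `S x`. -/
lemma exists_map_prodMap_id_eq {ρ : Measure (Rd d)} [IsFiniteMeasure ρ] [SFinite μ]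
    {S : Rd d → Rd d} (hS : Measurable S) (hγ : IsCoupling γ ρ (μ.map S)) :
    ∃ τ, IsCoupling τ ρ μ ∧ τ.map (Prod.map id S) = γ := by
  have : IsFiniteMeasure γ := ⟨by
    simpa [← hγ.1, Measure.map_apply measurable_fst MeasurableSet.univ] using
      measure_lt_top ρ univ⟩
  set σ := γ.map Prod.swap
  set K := σ.condKernel
  set τ' := μ ⊗ₘ K.comap S hS
  have hσfst : σ.fst = μ.map S := hγ.swap.1
  have hτ' : τ'.map (Prod.map S id) = σ := by
    ext t ht
    rw [Measure.map_apply (hS.prodMap measurable_id) ht,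
      Measure.compProd_apply ((hS.prodMap measurable_id) ht)]
    conv_rhs => rw [← σ.disintegrate K, Measure.compProd_apply ht, hσfst]
    rw [lintegral_map (ProbabilityTheory.Kernel.measurable_kernel_prodMk_left ht) hS]
    rfl
  have hγσ : γ = σ.map Prod.swap := by
    rw [Measure.map_map measurable_swap measurable_swap, Prod.swap_swap_eq, Measure.map_id]
  refine ⟨τ'.map Prod.swap, ⟨?_, ?_⟩, ?_⟩
  · rw [Measure.map_map measurable_fst measurable_swap, ← hγ.1, hγσ, ← hτ',
      Measure.map_map measurable_swap (hS.prodMap measurable_id),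
      Measure.map_map measurable_fst (measurable_swap.comp (hS.prodMap measurable_id))]
    rfl
  · rw [Measure.map_map measurable_snd measurable_swap]
    exact Measure.fst_compProd μ _
  · rw [Measure.map_map (measurable_id.prodMap hS) measurable_swap, hγσ, ← hτ',
      Measure.map_map measurable_swap (hS.prodMap measurable_id)]
    rfl

end IsCoupling

lemma isCoupling_map_prodMk {X : Type*} [MeasurableSpace X] {π : Measure X} {S T : X → Rd d}
    (hS : Measurable S) (hT : Measurable T) :
    IsCoupling (π.map fun x => (S x, T x)) (π.map S) (π.map T) :=
  ⟨by rw [Measure.map_map measurable_fst (hS.prodMk hT)]; rfl,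
    by rw [Measure.map_map measurable_snd (hS.prodMk hT)]; rfl⟩

section Wasserstein

variable {γ : Measure (Rd d × Rd d)} {μ ν : Measure (Rd d)}

lemma W2sqE_le_transportCost (hγ : IsCoupling γ μ ν) : W2sqE μ ν ≤ transportCost γ :=
  iInf₂_le γ hγ

lemma transportCost_eq_ofReal_integral (h : Integrable (fun q => ‖q.1 - q.2‖ ^ 2) γ) :
    transportCost γ = ENNReal.ofReal (∫ q, ‖q.1 - q.2‖ ^ 2 ∂γ) :=
  (ofReal_integral_eq_lintegral_ofReal h (ae_of_all _ fun _ => by positivity)).symm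

lemma transportCost_map_prodMk {X : Type*} [MeasurableSpace X] {π : Measure X}
    {S T : X → Rd d} (hS : Measurable S) (hT : Measurable T) :
    transportCost (π.map fun x => (S x, T x)) = ∫⁻ x, ENNReal.ofReal (‖S x - T x‖ ^ 2) ∂π :=
  lintegral_map (by fun_prop) (hS.prodMk hT)

lemma transportCost_map_swap (γ : Measure (Rd d × Rd d)) :
    transportCost (γ.map Prod.swap) = transportCost γ := by
  rw [transportCost, transportCost, lintegral_map (by fun_prop) measurable_swap]
  simp [norm_sub_rev]

lemma W2sq_le_integral (hγ : IsCoupling γ μ ν) (h : Integrable (fun q => ‖q.1 - q.2‖ ^ 2) γ) :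
    W2sq μ ν ≤ ∫ q, ‖q.1 - q.2‖ ^ 2 ∂γ :=
  ENNReal.toReal_le_of_le_ofReal (integral_nonneg fun _ => by positivity)
    ((W2sqE_le_transportCost hγ).trans_eq (transportCost_eq_ofReal_integral h))

lemma W2sq_map_le {X : Type*} [MeasurableSpace X] {π : Measure X} {S T : X → Rd d}
    (hS : Measurable S) (hT : Measurable T) (h : Integrable (fun x => ‖S x - T x‖ ^ 2) π) :
    W2sq (π.map S) (π.map T) ≤ ∫ x, ‖S x - T x‖ ^ 2 ∂π := by
  refine ENNReal.toReal_le_of_le_ofReal (integral_nonneg fun _ => by positivity) ?_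
  rw [ofReal_integral_eq_lintegral_ofReal h (ae_of_all _ fun _ => by positivity),
    ← transportCost_map_prodMk hS hT]
  exact W2sqE_le_transportCost (isCoupling_map_prodMk hS hT)

lemma W2sq_self (μ : Measure (Rd d)) : W2sq μ μ = 0 := by
  have h := W2sqE_le_transportCost (isCoupling_map_prodMk (π := μ) measurable_id measurable_id)
  rw [Measure.map_id, transportCost_map_prodMk measurable_id measurable_id] at h
  rw [W2sq, (by simpa using h : W2sqE μ μ = 0), ENNReal.toReal_zero]

lemma W2sqE_comm (μ ν : Measure (Rd d)) : W2sqE μ ν = W2sqE ν μ := by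
  have key : ∀ μ ν : Measure (Rd d), W2sqE μ ν ≤ W2sqE ν μ := fun μ ν =>
    le_iInf₂ fun γ hγ => (W2sqE_le_transportCost hγ.swap).trans_eq (transportCost_map_swap γ)
  exact (key μ ν).antisymm (key ν μ)

lemma W2sq_comm (μ ν : Measure (Rd d)) : W2sq μ ν = W2sq ν μ := by
  rw [W2sq, W2sq, W2sqE_comm]

lemma W2sqE_lt_top (hμ : MemP2 μ) (hν : MemP2 ν) : W2sqE μ ν < ⊤ := by
  have := hμ.1
  have := hν.1
  have hγ : IsCoupling (μ.prod ν) μ ν := ⟨by simp, by simp⟩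
  exact (W2sqE_le_transportCost hγ).trans_lt <| by
    rw [transportCost_eq_ofReal_integral (hγ.integrable_norm_sub_sq hμ hν)]
    exact ENNReal.ofReal_lt_top

lemma exists_isCoupling_integral_lt (hμ : MemP2 μ) (hν : MemP2 ν) {ε : ℝ} (hε : 0 < ε) :
    ∃ γ, IsCoupling γ μ ν ∧ ∫ q, ‖q.1 - q.2‖ ^ 2 ∂γ < W2sq μ ν + ε := by
  have hfin := (W2sqE_lt_top hμ hν).ne
  have hlt : W2sqE μ ν < ENNReal.ofReal (W2sq μ ν + ε) := by
    rw [W2sq, ENNReal.ofReal_add ENNReal.toReal_nonneg hε.le, ENNReal.ofReal_toReal hfin]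
    exact ENNReal.lt_add_right hfin (by simpa using hε)
  obtain ⟨γ, hγ⟩ := iInf_lt_iff.1 hlt
  obtain ⟨hγc, hcost⟩ := iInf_lt_iff.1 hγ
  rw [transportCost_eq_ofReal_integral (hγc.integrable_norm_sub_sq hμ hν)] at hcost
  exact ⟨γ, hγc,
    (ENNReal.ofReal_lt_ofReal_iff_of_nonneg (integral_nonneg fun _ => by positivity)).1 hcost⟩

end Wasserstein

section ZeroDistance

open Metric

variable {γ : Measure (Rd d × Rd d)} {μ ν : Measure (Rd d)}

/-- Mass of `F` that leaves `cthickening δ F` travels at least `δ`; Markov's inequality bounds it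
by the cost. -/
lemma IsCoupling.measure_le_cthickening_add (hγ : IsCoupling γ μ ν) {F : Set (Rd d)}
    (hF : MeasurableSet F) {δ : ℝ} (hδ : 0 < δ) :
    μ F ≤ ν (cthickening δ F) + transportCost γ / ENNReal.ofReal (δ ^ 2) := by
  have hsplit : Prod.fst ⁻¹' F ⊆ Prod.snd ⁻¹' cthickening δ F ∪
      {q : Rd d × Rd d | ENNReal.ofReal (δ ^ 2) ≤ ENNReal.ofReal (‖q.1 - q.2‖ ^ 2)} := by
    rintro ⟨x, y⟩ hx
    by_cases hxy : ‖x - y‖ ≤ δ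
    · left
      exact mem_cthickening_of_dist_le y x δ F hx (by rwa [dist_comm, dist_eq_norm])
    · right
      exact ENNReal.ofReal_le_ofReal (pow_le_pow_left₀ hδ.le (not_le.1 hxy).le 2)
  calc μ F = γ (Prod.fst ⁻¹' F) := by rw [← hγ.1, Measure.map_apply measurable_fst hF]
    _ ≤ γ (Prod.snd ⁻¹' cthickening δ F) + γ {q : Rd d × Rd d |
          ENNReal.ofReal (δ ^ 2) ≤ ENNReal.ofReal (‖q.1 - q.2‖ ^ 2)} :=
        (measure_mono hsplit).trans (measure_union_le _ _)
    _ ≤ ν (cthickening δ F) + transportCost γ / ENNReal.ofReal (δ ^ 2) := by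
        gcongr
        · rw [← hγ.2, Measure.map_apply measurable_snd isClosed_cthickening.measurableSet]
        · exact meas_ge_le_lintegral_div (by fun_prop) (by simp [hδ.ne']) ENNReal.ofReal_ne_top

lemma measure_le_of_W2sqE_eq_zero [IsFiniteMeasure ν] (h : W2sqE μ ν = 0) {F : Set (Rd d)}
    (hF : IsClosed F) : μ F ≤ ν F := by
  have hthick : ∀ δ > 0, μ F ≤ ν (cthickening δ F) := by
    intro δ hδ
    refine ENNReal.le_of_forall_pos_le_add fun η hη _ => ?_
    have hpos : 0 < ENNReal.ofReal (δ ^ 2) * η := by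
      simpa [ENNReal.mul_pos_iff, hδ] using hη
    obtain ⟨γ, hγ⟩ := iInf_lt_iff.1 (h ▸ hpos : W2sqE μ ν < _)
    obtain ⟨hγc, hcost⟩ := iInf_lt_iff.1 hγ
    refine (hγc.measure_le_cthickening_add hF.measurableSet hδ).trans ?_
    gcongr
    exact ENNReal.div_le_of_le_mul' hcost.le
  exact ge_of_tendsto ((tendsto_measure_cthickening_of_isClosed
    ⟨1, one_pos, measure_ne_top _ _⟩ hF).mono_left (nhdsWithin_le_nhds (s := Ioi 0)))
    (eventually_nhdsWithin_of_forall hthick)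

lemma eq_of_W2sqE_eq_zero [IsFiniteMeasure μ] [IsFiniteMeasure ν] (h : W2sqE μ ν = 0) :
    μ = ν := by
  have h' : W2sqE ν μ = 0 := W2sqE_comm μ ν ▸ h
  have hclosed : ∀ F, IsClosed F → μ F = ν F := fun F hF =>
    (measure_le_of_W2sqE_eq_zero h hF).antisymm (measure_le_of_W2sqE_eq_zero h' hF)
  exact ext_of_generate_finite {F | IsClosed F}
    (BorelSpace.measurable_eq.trans borel_eq_generateFrom_isClosed)
    isPiSystem_isClosed hclosed (hclosed _ isClosed_univ)

lemma eq_of_W2sq_eq_zero (hμ : MemP2 μ) (hν : MemP2 ν) (h : W2sq μ ν = 0) : μ = ν := by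
  have := hμ.1
  have := hν.1
  exact eq_of_W2sqE_eq_zero (((ENNReal.toReal_eq_zero_iff _).1 h).resolve_right
    (W2sqE_lt_top hμ hν).ne)

end ZeroDistance

section OptimalMaps

variable {μ : Measure (Rd d)} {S : Rd d → Rd d} {ψ : Rd d → ℝ}

lemma integrable_of_subgradient [IsProbabilityMeasure μ] (hμ : MemLp id 2 μ)
    (hS : MemLp S 2 μ) (hψ : AEStronglyMeasurable ψ μ)
    (hsub : ∀ᵐ x ∂μ, ∀ y, ψ x + ⟪S x, y - x⟫ ≤ ψ y) : Integrable ψ μ := by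
  obtain ⟨x₀, hx₀⟩ := hsub.exists
  have hdist : Integrable (fun x => ‖x - x₀‖ ^ 2) μ :=
    (hμ.sub (memLp_const x₀)).integrable_norm_sq
  refine integrable_of_le_of_le (g₁ := fun x => ψ x₀ - (‖S x₀‖ ^ 2 + ‖x - x₀‖ ^ 2) / 2)
    (g₂ := fun x => ψ x₀ + (‖S x‖ ^ 2 + ‖x - x₀‖ ^ 2) / 2) hψ (ae_of_all _ fun x => ?_) ?_
    ((integrable_const _).sub ((integrable_const _).add hdist |>.div_const 2))
    ((integrable_const _).add (hS.integrable_norm_sq.add hdist |>.div_const 2))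
  · have := abs_le.1 (abs_real_inner_le_half_add_sq (S x₀) (x - x₀))
    linarith [hx₀ x]
  · filter_upwards [hsub] with x hx
    have := abs_le.1 (abs_real_inner_le_half_add_sq (S x) (x - x₀))
    have hupper := hx x₀
    rw [← neg_sub x, inner_neg_right] at hupper
    linarith

lemma IsCoupling.integral_norm_sub_sq_le_of_subgradient {τ : Measure (Rd d × Rd d)}
    (hτ : IsCoupling τ μ μ) (hμ : MemP2 μ) (hS : MemLp S 2 μ)
    (hψ : AEStronglyMeasurable ψ μ) (hsub : ∀ᵐ x ∂μ, ∀ y, ψ x + ⟪S x, y - x⟫ ≤ ψ y) :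
    ∫ x, ‖x - S x‖ ^ 2 ∂μ ≤ ∫ q, ‖q.1 - S q.2‖ ^ 2 ∂τ := by
  have := hμ.1
  set φ : Rd d → ℝ := fun x => ‖x‖ ^ 2 - 2 * ψ x
  have hφ : Integrable φ μ := hμ.memLp.integrable_norm_sq.sub
    ((integrable_of_subgradient hμ.memLp hS hψ hsub).const_mul 2)
  have hdiag : Integrable (fun x => ‖x - S x‖ ^ 2) μ := (hμ.memLp.sub hS).integrable_norm_sq
  have hdiag_τ : Integrable (fun q => ‖q.2 - S q.2‖ ^ 2) τ := hτ.integrable_comp_snd hdiag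
  have hsubτ : ∀ᵐ q ∂τ, ∀ y, ψ q.2 + ⟪S q.2, y - q.2⟫ ≤ ψ y :=
    ae_of_ae_map measurable_snd.aemeasurable (hτ.2 ▸ hsub)
  calc ∫ x, ‖x - S x‖ ^ 2 ∂μ
      = ∫ q, (‖q.2 - S q.2‖ ^ 2 + φ q.1 - φ q.2) ∂τ := by
        rw [integral_sub (f := fun q => ‖q.2 - S q.2‖ ^ 2 + φ q.1)
            (hdiag_τ.add (hτ.integrable_comp_fst hφ)) (hτ.integrable_comp_snd hφ),
          integral_add hdiag_τ (hτ.integrable_comp_fst hφ),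
          hτ.integral_comp_snd (f := fun x => ‖x - S x‖ ^ 2) hdiag.1,
          hτ.integral_comp_fst hφ.1, hτ.integral_comp_snd hφ.1]
        ring
    _ ≤ ∫ q, ‖q.1 - S q.2‖ ^ 2 ∂τ := by
        refine integral_mono_ae ?_ ?_ ?_
        · exact (hdiag_τ.add (hτ.integrable_comp_fst hφ)).sub (hτ.integrable_comp_snd hφ)
        · exact ((hτ.memLp_comp_fst hμ.memLp).sub (hτ.memLp_comp_snd hS)).integrable_norm_sq
        · filter_upwards [hsubτ] with q hq
          exact norm_sub_sq_add_le_of_subgradient (hq q.1)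

lemma W2sq_map_eq_of_hasGradientAt (hμ : MemP2 μ) (hSm : Measurable S) (hν : MemP2 (μ.map S))
    (hψ : ConvexOn ℝ univ ψ) (hgrad : ∀ᵐ x ∂μ, HasGradientAt ψ (S x) x) :
    W2sq μ (μ.map S) = ∫ x, ‖x - S x‖ ^ 2 ∂μ := by
  have := hμ.1
  have hS := hν.memLp_of_map hSm
  have hψm := (continuousOn_univ.1 (hψ.continuousOn isOpen_univ)).aestronglyMeasurable (μ := μ)
  have hsub := hgrad.mono fun x hx y => hψ.add_inner_le_of_hasGradientAt hx y
  refine le_antisymm ?_ ?_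
  · simpa using W2sq_map_le measurable_id hSm (hμ.memLp.sub hS).integrable_norm_sq
  · rw [W2sq, ← ENNReal.ofReal_le_iff_le_toReal (W2sqE_lt_top hμ hν).ne]
    refine le_iInf₂ fun γ hγ => ?_
    obtain ⟨τ, hτ, rfl⟩ := hγ.exists_map_prodMap_id_eq hSm
    have hint : Integrable (fun q => ‖q.1 - S q.2‖ ^ 2) τ :=
      ((hτ.memLp_comp_fst hμ.memLp).sub (hτ.memLp_comp_snd hS)).integrable_norm_sq
    rw [transportCost, lintegral_map (by fun_prop) (measurable_id.prodMap hSm)]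
    simp only [Prod.map_fst, Prod.map_snd, id]
    rw [← ofReal_integral_eq_lintegral_ofReal hint (ae_of_all _ fun _ => by positivity)]
    exact ENNReal.ofReal_le_ofReal (hτ.integral_norm_sub_sq_le_of_subgradient hμ hS hψm hsub)

end OptimalMaps

section Extrapolation

variable {μ₀ ρ : Measure (Rd d)} {g : Rd d → Rd d} {α : ℝ}

lemma memP2_map_extrapolate (h0 : MemP2 μ₀) (hg : Measurable g) (h1 : MemP2 (μ₀.map g)) :
    MemP2 (μ₀.map fun x => (1 - α) • x + α • g x) :=
  have := h0.1
  memP2_map (by fun_prop) ((h0.memLp.const_smul (1 - α)).add ((h1.memLp_of_map hg).const_smul α))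

lemma integral_norm_sub_extrapolate_sq :
    ∫ x, ‖x - ((1 - α) • x + α • g x)‖ ^ 2 ∂μ₀ = α ^ 2 * ∫ x, ‖x - g x‖ ^ 2 ∂μ₀ := by
  rw [← integral_const_mul]
  congr 1 with x
  rw [show x - ((1 - α) • x + α • g x) = α • (x - g x) by module, norm_smul, mul_pow,
    Real.norm_eq_abs, sq_abs]

lemma W2sq_map_map_extrapolate_le (h0 : MemP2 μ₀) (hg : Measurable g) (h1 : MemP2 (μ₀.map g)) :
    W2sq (μ₀.map g) (μ₀.map fun x => (1 - α) • x + α • g x)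
      ≤ (α - 1) ^ 2 * ∫ x, ‖x - g x‖ ^ 2 ∂μ₀ := by
  have hT := (memP2_map_extrapolate (α := α) h0 hg h1).memLp_of_map (by fun_prop)
  rw [← integral_const_mul]
  refine (W2sq_map_le hg (by fun_prop) ((h1.memLp_of_map hg).sub hT).integrable_norm_sq).trans_eq
    (integral_congr_ae (ae_of_all _ fun x => ?_))
  dsimp only
  rw [show g x - ((1 - α) • x + α • g x) = (α - 1) • (x - g x) by module, norm_smul, mul_pow,
    Real.norm_eq_abs, sq_abs]

lemma W2sq_map_extrapolate_le (hα : 1 ≤ α) (h0 : MemP2 μ₀) (hg : Measurable g)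
    (h1 : MemP2 (μ₀.map g)) (hρ : MemP2 ρ) :
    W2sq ρ (μ₀.map fun x => (1 - α) • x + α • g x)
      ≤ α * W2sq ρ (μ₀.map g) - (α - 1) * W2sq ρ μ₀ + α * (α - 1) * ∫ x, ‖x - g x‖ ^ 2 ∂μ₀ := by
  have := h0.1
  have := hρ.1
  set T : Rd d → Rd d := fun x => (1 - α) • x + α • g x
  have hTm : Measurable T := by fun_prop
  have hgL := h1.memLp_of_map hg
  have hTL := (memP2_map_extrapolate (α := α) h0 hg h1).memLp_of_map hTm
  refine le_of_forall_pos_le_add fun ε hε => ?_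
  obtain ⟨γ, hγ, hcost⟩ := exists_isCoupling_integral_lt hρ h1 (div_pos hε (by linarith : 0 < α))
  obtain ⟨τ, hτ, rfl⟩ := hγ.exists_map_prodMap_id_eq hg
  rw [integral_map (measurable_id.prodMap hg).aemeasurable (by fun_prop)] at hcost
  simp only [Prod.map_fst, Prod.map_snd, id] at hcost
  have hA : Integrable (fun q => ‖q.1 - g q.2‖ ^ 2) τ :=
    ((hτ.memLp_comp_fst hρ.memLp).sub (hτ.memLp_comp_snd hgL)).integrable_norm_sq
  have hB : Integrable (fun q => ‖q.1 - q.2‖ ^ 2) τ := hτ.integrable_norm_sub_sq hρ h0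
  have hC : Integrable (fun q => ‖q.2 - g q.2‖ ^ 2) τ :=
    hτ.integrable_comp_snd (h0.memLp.sub hgL).integrable_norm_sq
  have hWT : W2sq ρ (μ₀.map T) ≤ ∫ q, ‖q.1 - T q.2‖ ^ 2 ∂τ := by
    have := W2sq_map_le measurable_fst (hTm.comp measurable_snd)
      ((hτ.memLp_comp_fst hρ.memLp).sub (hτ.memLp_comp_snd hTL)).integrable_norm_sq
    rwa [hτ.1, ← Measure.map_map hTm measurable_snd, hτ.2] at this
  have hsplit : ∫ q, ‖q.1 - T q.2‖ ^ 2 ∂τ = α * ∫ q, ‖q.1 - g q.2‖ ^ 2 ∂τ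
      - (α - 1) * ∫ q, ‖q.1 - q.2‖ ^ 2 ∂τ + α * (α - 1) * ∫ x, ‖x - g x‖ ^ 2 ∂μ₀ := by
    simp_rw [T, norm_sub_extrapolate_sq]
    rw [integral_add (f := fun q => α * ‖q.1 - g q.2‖ ^ 2 - (α - 1) * ‖q.1 - q.2‖ ^ 2)
        ((hA.const_mul _).sub (hB.const_mul _)) (hC.const_mul _),
      integral_sub (hA.const_mul _) (hB.const_mul _), integral_const_mul, integral_const_mul,
      integral_const_mul, hτ.integral_comp_snd (f := fun x => ‖x - g x‖ ^ 2) (by fun_prop)]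
  have hW0 : W2sq ρ μ₀ ≤ ∫ q, ‖q.1 - q.2‖ ^ 2 ∂τ := W2sq_le_integral hτ hB
  calc W2sq ρ (μ₀.map T) ≤ ∫ q, ‖q.1 - T q.2‖ ^ 2 ∂τ := hWT
    _ ≤ α * (W2sq ρ (μ₀.map g) + ε / α) - (α - 1) * W2sq ρ μ₀
        + α * (α - 1) * ∫ x, ‖x - g x‖ ^ 2 ∂μ₀ := by
      rw [hsplit]
      gcongr
    _ = _ := by field_simp; ring

end Extrapolation

end Transport

/-- when the geodesic from `μ₀` to `μ₁` extends up to time `α`, the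
extrapolated measure `ω(α)` is the unique minimizer of the metric-extrapolation
functional, attaining the lower bound `−αβ W₂²(μ₀,μ₁)`. -/
theorem stmt_10 {d : ℕ} (α β : ℝ) (hα : 1 < α) (hβ : β = α - 1)
    (μ₀ μ₁ : Measure (Rd d)) (hac : μ₀ ≪ volume) (h0 : MemP2 μ₀) (h1 : MemP2 μ₁)
    (u : Rd d → ℝ) (hu : ConvexOn ℝ univ u)
    (hpush : μ₁ = μ₀.map (gradient u))
    (hconv : ConvexOn ℝ univ fun x => α * u x - β * (‖x‖^2 / 2)) :
    (α * W2sq (μ₀.map fun x => (1 - α) • x + α • gradient u x) μ₁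
        - β * W2sq (μ₀.map fun x => (1 - α) • x + α • gradient u x) μ₀
      = -(α * β * W2sq μ₀ μ₁)) ∧
    (∀ ρ, MemP2 ρ →
      α * W2sq ρ μ₁ - β * W2sq ρ μ₀ = -(α * β * W2sq μ₀ μ₁) →
      ρ = μ₀.map fun x => (1 - α) • x + α • gradient u x) ∧
    W2sq μ₀ (μ₀.map fun x => (1 - α) • x + α • gradient u x) = α^2 * W2sq μ₀ μ₁ ∧
    W2sq μ₁ (μ₀.map fun x => (1 - α) • x + α • gradient u x) = β^2 * W2sq μ₀ μ₁ := by
  subst hβ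
  have hgm : Measurable (gradient u) :=
    (InnerProductSpace.toDual ℝ (Rd d)).symm.continuous.measurable.comp (measurable_fderiv ℝ u)
  have h1' : MemP2 (μ₀.map (gradient u)) := hpush ▸ h1
  have hdiff : ∀ᵐ x ∂μ₀, DifferentiableAt ℝ u x :=
    hac.ae_le hu.locallyLipschitz.ae_differentiableAt
  set T : Rd d → Rd d := fun x => (1 - α) • x + α • gradient u x
  have hω : MemP2 (μ₀.map T) := memP2_map_extrapolate h0 hgm h1'
  set D := ∫ x, ‖x - gradient u x‖ ^ 2 ∂μ₀
  have hW01 : W2sq μ₀ μ₁ = D := hpush ▸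
    W2sq_map_eq_of_hasGradientAt h0 hgm h1' hu (hdiff.mono fun _ hx => hx.hasGradientAt)
  have hW0ω : W2sq μ₀ (μ₀.map T) = α ^ 2 * D := by
    rw [W2sq_map_eq_of_hasGradientAt h0 (by fun_prop) hω hconv
      (hdiff.mono fun _ hx => hx.hasGradientAt_extrapolate α), integral_norm_sub_extrapolate_sq]
  have hlower : ∀ ρ, MemP2 ρ → W2sq ρ (μ₀.map T)
      ≤ α * W2sq ρ μ₁ - (α - 1) * W2sq ρ μ₀ + α * (α - 1) * D := fun ρ hρ => by
    rw [hpush]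
    exact W2sq_map_extrapolate_le hα.le h0 hgm h1' hρ
  have hW1ω : W2sq μ₁ (μ₀.map T) = (α - 1) ^ 2 * D := by
    refine le_antisymm (hpush ▸ W2sq_map_map_extrapolate_le h0 hgm h1') ?_
    have := hlower _ hω
    rw [W2sq_self, W2sq_comm _ μ₀, hW0ω, W2sq_comm] at this
    nlinarith
  refine ⟨?_, fun ρ hρ hF => ?_, by rw [hW0ω, hW01], by rw [hW1ω, hW01]⟩
  · rw [W2sq_comm, hW1ω, W2sq_comm, hW0ω, hW01]
    ring
  · rw [hW01] at hF
    exact eq_of_W2sq_eq_zero hρ hω (le_antisymm (by linarith [hlower ρ hρ]) ENNReal.toReal_nonneg)
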